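/- Let p ≥ 11 with p ≡ 4 (mod 10). Then ex(p;T_{11}*) = (9p−22)/2. -/

import Mathlib

open SimpleGraph

/-- `G` contains a copy of `H` as a subgraph: there is an injective map
preserving adjacency. -/
def ContainsCopy {V : Type*} {W : Type*} (G : SimpleGraph V) (H : SimpleGraph W) : Prop :=
  ∃ f : W ↪ V, ∀ a b, H.Adj a b → G.Adj (f a) (f b)

/-- `exNum p H` is the maximal number of edges in a simple graph of order `p`
not containing a copy of `H`. -/
noncomputable def exNum (p : ℕ) {W : Type*} (H : SimpleGraph W) : ℕ :=
  sSup {m : ℕ | ∃ G : SimpleGraph (Fin p), ¬ ContainsCopy G H ∧ Nat.card G.edgeSet = m}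

/-- `exNum2 p H₁ H₂` is the maximal number of edges in a simple graph of order `p`
containing no copy of `H₁` and no copy of `H₂`. -/
noncomputable def exNum2 (p : ℕ) {W₁ W₂ : Type*} (H₁ : SimpleGraph W₁) (H₂ : SimpleGraph W₂) : ℕ :=
  sSup {m : ℕ | ∃ G : SimpleGraph (Fin p),
    ¬ ContainsCopy G H₁ ∧ ¬ ContainsCopy G H₂ ∧ Nat.card G.edgeSet = m}

/-- The tree `T_n` on vertices `v_0, …, v_{n-1}` with edges
`v_0v_1, …, v_0v_{n-2}` and `v_{n-2}v_{n-1}`: the unique tree on `n` vertices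
of maximal degree `n-2`. -/
def Tn (n : ℕ) : SimpleGraph (Fin n) :=
  SimpleGraph.fromRel (fun a b =>
    (a.val = 0 ∧ 1 ≤ b.val ∧ b.val ≤ n - 2) ∨ (a.val = n - 2 ∧ b.val = n - 1))

/-- The tree `T_n^*` on vertices `v_0, …, v_{n-1}` with edges
`v_0v_1, …, v_0v_{n-3}`, `v_{n-3}v_{n-2}` and `v_{n-2}v_{n-1}`. -/
def TnStar (n : ℕ) : SimpleGraph (Fin n) :=
  SimpleGraph.fromRel (fun a b =>
    (a.val = 0 ∧ 1 ≤ b.val ∧ b.val ≤ n - 3) ∨ (a.val = n - 3 ∧ b.val = n - 2) ∨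
    (a.val = n - 2 ∧ b.val = n - 1))

/-!
A vertex `v` at the start of a path `v x y z` in a `T₁₁*`-free graph has at most six neighbours
besides `x, y, z`. Around a vertex `v` of maximum degree `Δ ≥ 8` this pins down the component:
when `Δ ≥ 9` every vertex at distance at least two from `v` is a leaf hanging from `N(v)`, and
when `Δ = 8` every non-neighbour of `v` has all its neighbours in `N(v)`. Counting degrees, every
component on `n` vertices satisfies `∑ deg + deficit n ≤ 9 n`, and deficits of component sizes
adding up to `4 (mod 10)` add up to at least `22`; hence `2 e ≤ 9 p - 22`. Equality holds for
`(p - 14) / 10` disjoint copies of `K₁₀` next to `K_{8,6}` with a perfect matching added on its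
side of size 8.
-/

open Finset

/-- A lower bound for `9 n - ∑ deg` on a connected `T₁₁*`-free graph with `n` vertices: `K_n` is
optimal for `n ≤ 10`, and `n = 14` is the size of the sharp component of the extremal graph. -/
def deficit (n : ℕ) : ℕ :=
  if n ≤ 10 then n * (10 - n) else if n = 14 then 22 else if n ≤ 16 then n else 25

lemma deficit_eq_of_seventeen_le {n : ℕ} (hn : 17 ≤ n) : deficit n = 25 := by
  unfold deficit; split_ifs <;> omega

lemma nine_le_deficit {n : ℕ} (hn : 0 < n) (hn10 : n ≠ 10) : 9 ≤ deficit n := by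
  rcases lt_or_ge n 17 with h | h
  · interval_cases n <;> first | omega | decide
  · rw [deficit_eq_of_seventeen_le h]; omega

lemma twentyTwo_le_deficit {n : ℕ} (hn : n % 10 = 4) : 22 ≤ deficit n := by
  rcases lt_or_ge n 17 with h | h
  · interval_cases n <;> first | omega | decide
  · rw [deficit_eq_of_seventeen_le h]; omega

lemma twentyTwo_le_deficit_add_deficit {a b : ℕ} (ha : 0 < a) (hb : 0 < b) (ha10 : a ≠ 10)
    (hb10 : b ≠ 10) (hab : (a + b) % 10 = 4) : 22 ≤ deficit a + deficit b := by
  rcases le_or_gt 17 a with h | h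
  · rw [deficit_eq_of_seventeen_le h]; omega
  rcases le_or_gt 17 b with h' | h'
  · rw [deficit_eq_of_seventeen_le h']; omega
  interval_cases a <;> interval_cases b <;> first | omega | decide

/-- Sizes equal to `10` contribute nothing to either side modulo `10`; among the other sizes,
one or two of them already carry a deficit of `22`, and three of them carry at least `27`. -/
theorem twentyTwo_le_sum_deficit {ι : Type*} (s : Finset ι) (m : ι → ℕ) (hm : ∀ i ∈ s, 0 < m i)
    (hs : (∑ i ∈ s, m i) % 10 = 4) : 22 ≤ ∑ i ∈ s, deficit (m i) := by
  classical
  set T := s.filter (m · ≠ 10)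
  have hTs : T ⊆ s := filter_subset _ _
  have hT : (∑ i ∈ T, m i) % 10 = 4 := by
    have htens : ∑ i ∈ s.filter (¬ m · ≠ 10), m i = 10 * #(s.filter (¬ m · ≠ 10)) := by
      rw [sum_const_nat fun i hi => by simpa using (mem_filter.1 hi).2, mul_comm]
    rwa [← sum_filter_add_sum_filter_not s (m · ≠ 10), htens, Nat.add_mul_mod_self_left] at hs
  have hmT : ∀ i ∈ T, 0 < m i ∧ m i ≠ 10 := fun i hi => ⟨hm i (hTs hi), (mem_filter.1 hi).2⟩
  refine le_trans ?_ (sum_le_sum_of_subset hTs)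
  obtain h | h | h | h : #T = 0 ∨ #T = 1 ∨ #T = 2 ∨ 3 ≤ #T := by omega
  · simp [card_eq_zero.1 h] at hT
  · obtain ⟨i, hi⟩ := card_eq_one.1 h
    simp only [hi, sum_singleton] at hT ⊢
    exact twentyTwo_le_deficit hT
  · obtain ⟨i, j, hij, hij'⟩ := card_eq_two.1 h
    have hi := hmT i (by simp [hij'])
    have hj := hmT j (by simp [hij'])
    rw [hij', sum_pair hij] at hT ⊢
    exact twentyTwo_le_deficit_add_deficit hi.1 hj.1 hi.2 hj.2 hT
  · calc 22 ≤ #T * 9 := by omega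
      _ ≤ ∑ i ∈ T, deficit (m i) :=
        card_nsmul_le_sum _ _ _ fun i hi => nine_le_deficit (hmT i hi).1 (hmT i hi).2

section Containment

variable {V : Type*} {G : SimpleGraph V}

lemma containsCopy_iff_isContained {W : Type*} {H : SimpleGraph W} :
    ContainsCopy G H ↔ H ⊑ G :=
  isContained_iff_exists_le_comap.symm

variable [DecidableEq V] [G.LocallyFinite]

/-- `v, x, y, z` play the roles of `v₀, v₈, v₉, v₁₀`; the degree condition says that `v` has seven
more neighbours, the leaves `v₁, …, v₇`. -/
theorem tnStar_isContained_iff : TnStar 11 ⊑ G ↔ ∃ v x y z, G.Adj v x ∧ G.Adj x y ∧ G.Adj y z ∧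
    y ≠ v ∧ z ≠ v ∧ z ≠ x ∧ 8 + #(G.neighborFinset v ∩ {y, z}) ≤ G.degree v := by
  have hT (a b : Fin 11) : (TnStar 11).Adj a b ↔ a ≠ b ∧ _ := fromRel_adj _ a b
  constructor
  · rintro ⟨f⟩
    have hf {a b : Fin 11} (h : (TnStar 11).Adj a b) : G.Adj (f a) (f b) := f.toHom.map_adj h
    set L := (Icc 1 8 : Finset (Fin 11)).map f.toEmbedding
    have hL : L ⊆ G.neighborFinset (f 0) := by
      intro w hw
      obtain ⟨i, hi, rfl⟩ := mem_map.1 hw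
      rw [mem_Icc] at hi
      exact (mem_neighborFinset _ _ _).2 (hf ((hT _ _).2 ⟨by rintro rfl; simp at hi, by
        simp only [Fin.le_def] at hi; omega⟩))
    have hdisj : Disjoint L (G.neighborFinset (f 0) ∩ {f 9, f 10}) := by
      simp only [L, Finset.disjoint_left, mem_map, mem_Icc, mem_inter, mem_insert, mem_singleton]
      rintro _ ⟨i, ⟨-, hi⟩, rfl⟩ ⟨-, h | h⟩ <;> cases f.injective h <;> exact absurd hi (by decide)
    refine ⟨f 0, f 8, f 9, f 10, hf ((hT _ _).2 (by decide)), hf ((hT _ _).2 (by decide)),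
      hf ((hT _ _).2 (by decide)), fun h => by simpa using f.injective h,
      fun h => by simpa using f.injective h, fun h => by simpa using f.injective h, ?_⟩
    calc 8 + #(G.neighborFinset (f 0) ∩ {f 9, f 10})
        = #(L ∪ G.neighborFinset (f 0) ∩ {f 9, f 10}) := by
          rw [card_union_of_disjoint hdisj]; simp [L]
      _ ≤ G.degree (f 0) := by
          rw [← card_neighborFinset_eq_degree]
          exact card_le_card (union_subset hL inter_subset_left)
  · rintro ⟨v, x, y, z, hvx, hxy, hyz, hyv, hzv, hzx, hdeg⟩
    have h7 : 7 ≤ #(G.neighborFinset v \ {x, y, z}) := by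
      have hsub : G.neighborFinset v ∩ {x, y, z} ⊆ insert x (G.neighborFinset v ∩ {y, z}) := by
        intro w; simp only [mem_inter, mem_insert, mem_singleton]; tauto
      have := card_sdiff_add_card_inter (G.neighborFinset v) {x, y, z}
      have := (card_le_card hsub).trans (card_insert_le _ _)
      rw [card_neighborFinset_eq_degree] at *
      omega
    obtain ⟨T, hT, hT7⟩ := exists_subset_card_eq h7
    let e := Fintype.equivFinOfCardEq (α := T) (by simpa using hT7)
    let t (i : Fin 7) : V := e.symm i
    have ht_inj : Function.Injective t := Subtype.val_injective.comp e.symm.injective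
    have ht (i : Fin 7) : G.Adj v (t i) ∧ t i ≠ x ∧ t i ≠ y ∧ t i ≠ z := by
      simpa [not_or] using hT (e.symm i).2
    have hvt (i : Fin 7) : t i ≠ v := (G.ne_of_adj (ht i).1).symm
    let f : Fin 11 → V := ![v, t 0, t 1, t 2, t 3, t 4, t 5, t 6, x, y, z]
    have hf_inj : Function.Injective f := by
      rw [← List.nodup_ofFn]
      simp [f, List.ofFn_succ, ht_inj.eq_iff, G.ne_of_adj hvx, hyv.symm, hzv.symm,
        G.ne_of_adj hxy, G.ne_of_adj hyz, hzx.symm, ht, (hvt _).symm]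
    refine ⟨⟨⟨f, fun {a b} hab => ?_⟩, hf_inj⟩⟩
    simp only [TnStar, fromRel_adj] at hab
    fin_cases a <;> fin_cases b <;> (try exact absurd hab (by decide)) <;>
      simp [f, ht, hvx, hxy, hyz, (ht _).1.symm, hvx.symm, hxy.symm, hyz.symm]

lemma card_neighborFinset_inter_pair_le_one {v y z : V} (hz : ¬ G.Adj v z) :
    #(G.neighborFinset v ∩ {y, z}) ≤ 1 := by
  refine (card_le_card fun w hw => ?_).trans (card_singleton y).le
  simp only [mem_inter, mem_insert, mem_singleton, mem_neighborFinset] at hw ⊢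
  rcases hw with ⟨hw, rfl | rfl⟩
  · rfl
  · exact absurd hw hz

theorem degree_le_of_path (hfree : (TnStar 11).Free G) {v x y z : V} (hvx : G.Adj v x)
    (hxy : G.Adj x y) (hyz : G.Adj y z) (hyv : y ≠ v) (hzv : z ≠ v) (hzx : z ≠ x) :
    G.degree v ≤ 7 + #(G.neighborFinset v ∩ {y, z}) := by
  by_contra h
  exact hfree (tnStar_isContained_iff.2 ⟨v, x, y, z, hvx, hxy, hyz, hyv, hzv, hzx, by omega⟩)

theorem adj_or_neighborFinset_subset (hfree : (TnStar 11).Free G) {v w : V}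
    (hv : 8 ≤ G.degree v) (hw : G.Reachable v w) :
    G.Adj v w ∨ G.neighborFinset w ⊆ G.neighborFinset v := by
  replace hw := (reachable_iff_reflTransGen v w).1 hw
  induction hw with
  | refl => exact Or.inr subset_rfl
  | @tail a b _ hab ih =>
    rcases ih with hva | hsub
    · by_cases hvb : G.Adj v b
      · exact Or.inl hvb
      by_cases hbv : b = v
      · exact Or.inr (hbv ▸ subset_rfl)
      refine Or.inr fun z hz => ?_
      rw [mem_neighborFinset] at hz ⊢
      by_contra hvz
      have hzv : z ≠ v := by rintro rfl; exact hvb hz.symm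
      have hza : z ≠ a := by rintro rfl; exact hvz hva
      -- the path `v a b z` meets `N(v)` only in `a`
      have := degree_le_of_path hfree hva hab hz hbv hzv hza
      simp only [mem_neighborFinset, hvb, hvz, not_false_eq_true, inter_insert_of_notMem,
        inter_singleton_of_notMem, card_empty] at this
      omega
    · exact Or.inl ((mem_neighborFinset _ _ _).1 (hsub ((mem_neighborFinset _ _ _).2 hab)))

theorem degree_le_one_of_reachable (hfree : (TnStar 11).Free G) {v w : V} (hv : 9 ≤ G.degree v)
    (hw : G.Reachable v w) (hwv : w ≠ v) (hvw : ¬ G.Adj v w) : G.degree w ≤ 1 := by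
  have hsub := (adj_or_neighborFinset_subset hfree (by omega) hw).resolve_left hvw
  rw [← card_neighborFinset_eq_degree, card_le_one]
  intro a ha a' ha'
  by_contra hne
  have hva := (mem_neighborFinset _ _ _).1 (hsub ha)
  have hva' := (mem_neighborFinset _ _ _).1 (hsub ha')
  rw [mem_neighborFinset] at ha ha'
  have := degree_le_of_path hfree hva ha.symm ha' hwv (G.ne_of_adj hva').symm (Ne.symm hne)
  have := card_neighborFinset_inter_pair_le_one (y := a') hvw
  rw [pair_comm] at this
  omega

end Containment

section Counting

variable {V : Type*} [DecidableEq V] {G : SimpleGraph V} [G.LocallyFinite]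

theorem sum_card_neighborFinset_inter_comm (s t : Finset V) :
    ∑ a ∈ s, #(G.neighborFinset a ∩ t) = ∑ b ∈ t, #(G.neighborFinset b ∩ s) := by
  classical
  have hs (a : V) : G.neighborFinset a ∩ t = bipartiteAbove G.Adj t a := by
    ext; simp [bipartiteAbove, and_comm]
  have ht (b : V) : G.neighborFinset b ∩ s = bipartiteBelow G.Adj s b := by
    ext; simp [bipartiteBelow, and_comm, G.adj_comm]
  simp only [hs, ht]
  exact sum_card_bipartiteAbove_eq_sum_card_bipartiteBelow _

theorem card_inter_add_card_inter_le_degree {S A : Finset V} (a : V) :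
    #(G.neighborFinset a ∩ A) + #(G.neighborFinset a ∩ (S \ A)) ≤ G.degree a := by
  rw [← card_neighborFinset_eq_degree, ← card_inter_add_card_sdiff (G.neighborFinset a) A]
  exact Nat.add_le_add_left (card_le_card fun w hw => by simp_all) _

/-- The share of `a ∈ A` in the degree sum of `S` when `S \ A` is independent: an edge inside `A`
is split between its two ends, an edge from `a` to `S \ A` is counted for both of its ends. -/
def weight (G : SimpleGraph V) [G.LocallyFinite] (S A : Finset V) (a : V) : ℕ :=
  #(G.neighborFinset a ∩ A) + 2 * #(G.neighborFinset a ∩ (S \ A))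

theorem sum_degree_eq_sum_weight {S A : Finset V} (hS : ∀ u ∈ S, G.neighborFinset u ⊆ S)
    (hA : A ⊆ S) (hB : ∀ b ∈ S \ A, G.neighborFinset b ⊆ A) :
    ∑ u ∈ S, G.degree u = ∑ a ∈ A, weight G S A a := by
  have hdegA : ∀ a ∈ A,
      G.degree a = #(G.neighborFinset a ∩ A) + #(G.neighborFinset a ∩ (S \ A)) := by
    intro a ha
    rw [← card_union_of_disjoint (disjoint_sdiff.mono inter_subset_right inter_subset_right),
      ← inter_union_distrib_left, union_sdiff_of_subset hA, inter_eq_left.2 (hS a (hA ha)),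
      card_neighborFinset_eq_degree]
  have hdegB : ∑ b ∈ S \ A, G.degree b = ∑ a ∈ A, #(G.neighborFinset a ∩ (S \ A)) := by
    rw [sum_card_neighborFinset_inter_comm]
    refine sum_congr rfl fun b hb => ?_
    rw [inter_eq_left.2 (hB b hb), card_neighborFinset_eq_degree]
  rw [← sum_sdiff hA, hdegB, sum_congr rfl hdegA, ← sum_add_distrib]
  exact sum_congr rfl fun a _ => by rw [weight]; ring

/-- With `X = N(u) ∩ A` and `O = A \ ({u} ∪ X)`, a vertex of `O` has no neighbour in `O`, and an
edge between `X` and `O` costs its end in `X` as much as it gives to its end in `O`. -/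
theorem sum_weight_le_of_card_inter_eq_two {S A : Finset V} {u : V} (hA : #A = 8)
    (hB : #(S \ A) ≤ 6) (hmax : ∀ a ∈ A, G.degree a ≤ 8) (hu : u ∈ A)
    (hX : #(G.neighborFinset u ∩ A) = 2)
    (hO : ∀ a ∈ A, ¬ G.Adj u a → G.neighborFinset a ⊆ G.neighborFinset u) :
    ∑ a ∈ A, weight G S A a ≤ 104 := by
  set X := G.neighborFinset u ∩ A
  set O := A \ insert u X
  have huX : u ∉ X := fun h => notMem_neighborFinset_self G u (mem_inter.1 h).1
  have hsub : insert u X ⊆ A := insert_subset hu inter_subset_right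
  have hO5 : #O = 5 := by rw [card_sdiff_of_subset hsub, card_insert_of_notMem huX, hX, hA]
  have hdeg (a : V) (ha : a ∈ A) :
      #(G.neighborFinset a ∩ A) + #(G.neighborFinset a ∩ (S \ A)) ≤ 8 :=
    (card_inter_add_card_inter_le_degree a).trans (hmax a ha)
  have hB' (a : V) : #(G.neighborFinset a ∩ (S \ A)) ≤ 6 :=
    (card_le_card inter_subset_right).trans hB
  have hOw : ∀ a ∈ O, weight G S A a ≤ #(G.neighborFinset a ∩ X) + 12 := by
    intro a ha
    obtain ⟨haA, haX⟩ := mem_sdiff.1 ha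
    have hua : ¬ G.Adj u a := fun h =>
      haX (mem_insert_of_mem (mem_inter.2 ⟨(mem_neighborFinset _ _ _).2 h, haA⟩))
    have : G.neighborFinset a ∩ A ⊆ G.neighborFinset a ∩ X := fun w hw =>
      mem_inter.2 ⟨(mem_inter.1 hw).1,
        mem_inter.2 ⟨hO a haA hua (mem_inter.1 hw).1, (mem_inter.1 hw).2⟩⟩
    have := card_le_card this
    have := hB' a
    rw [weight]
    omega
  have hXw : ∀ x ∈ X, weight G S A x + #(G.neighborFinset x ∩ O) ≤ 15 := by
    intro x hx
    obtain ⟨hux, hxA⟩ := mem_inter.1 hx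
    have hsub' : insert u (G.neighborFinset x ∩ O) ⊆ G.neighborFinset x ∩ A :=
      insert_subset (mem_inter.2 ⟨(mem_neighborFinset _ _ _).2
        ((mem_neighborFinset _ _ _).1 hux).symm, hu⟩) (inter_subset_inter_left sdiff_subset)
    have huO : u ∉ G.neighborFinset x ∩ O := fun h =>
      (mem_sdiff.1 (mem_inter.1 h).2).2 (mem_insert_self _ _)
    have := card_le_card hsub'
    rw [card_insert_of_notMem huO] at this
    have := hdeg x hxA
    rw [weight]
    omega
  have hsplit : ∑ a ∈ A, weight G S A a =
      weight G S A u + ∑ x ∈ X, weight G S A x + ∑ a ∈ O, weight G S A a := by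
    rw [← sum_sdiff hsub, sum_insert huX]; ring
  have hu14 : weight G S A u ≤ 14 := by have := hdeg u hu; have := hB' u; rw [weight]; omega
  have hX30 : ∑ x ∈ X, (weight G S A x + #(G.neighborFinset x ∩ O)) ≤ 30 :=
    (sum_le_card_nsmul _ _ _ hXw).trans (by rw [hX]; rfl)
  have hO60 := sum_le_sum hOw
  rw [sum_add_distrib] at hX30 hO60
  rw [sum_const, hO5, smul_eq_mul] at hO60
  have := sum_card_neighborFinset_inter_comm (G := G) O X
  omega

end Counting

section Components

variable {V : Type*} [Fintype V] [DecidableEq V] {G : SimpleGraph V} [DecidableRel G.Adj]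

lemma neighborFinset_subset_supp {c : G.ConnectedComponent} {u : V} (hu : u ∈ c.supp) :
    G.neighborFinset u ⊆ c.supp.toFinset := fun _ hw =>
  Set.mem_toFinset.2 (c.mem_supp_of_adj_mem_supp hu ((mem_neighborFinset _ _ _).1 hw))

lemma sum_degree_supp_le_card_mul (c : G.ConnectedComponent) :
    ∑ u ∈ c.supp.toFinset, G.degree u ≤ #c.supp.toFinset * (#c.supp.toFinset - 1) := by
  refine (sum_le_card_nsmul _ _ _ fun u hu => ?_).trans_eq (smul_eq_mul _ _)
  rw [← card_neighborFinset_eq_degree, ← card_erase_of_mem hu]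
  exact card_le_card fun w hw => mem_erase.2 ⟨(G.ne_of_adj ((mem_neighborFinset _ _ _).1 hw)).symm,
    neighborFinset_subset_supp (Set.mem_toFinset.1 hu) hw⟩

def farFinset (c : G.ConnectedComponent) (v : V) : Finset V :=
  c.supp.toFinset \ insert v (G.neighborFinset v)

lemma mem_farFinset {c : G.ConnectedComponent} {v w : V} :
    w ∈ farFinset c v ↔ w ∈ c.supp ∧ w ≠ v ∧ ¬ G.Adj v w := by
  simp [farFinset]

lemma insert_neighborFinset_subset_supp {c : G.ConnectedComponent} {v : V} (hv : v ∈ c.supp) :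
    insert v (G.neighborFinset v) ⊆ c.supp.toFinset :=
  insert_subset (Set.mem_toFinset.2 hv) (neighborFinset_subset_supp hv)

lemma card_supp_eq {c : G.ConnectedComponent} {v : V} (hv : v ∈ c.supp) :
    #c.supp.toFinset = 1 + G.degree v + #(farFinset c v) := by
  have := card_le_card (insert_neighborFinset_subset_supp hv)
  rw [card_insert_of_notMem (notMem_neighborFinset_self G v), card_neighborFinset_eq_degree]
    at this
  rw [farFinset, card_sdiff_of_subset (insert_neighborFinset_subset_supp hv),
    card_insert_of_notMem (notMem_neighborFinset_self G v), card_neighborFinset_eq_degree]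
  omega

lemma sum_degree_supp_eq {c : G.ConnectedComponent} {v : V} (hv : v ∈ c.supp) :
    ∑ u ∈ c.supp.toFinset, G.degree u =
      G.degree v + ∑ a ∈ G.neighborFinset v, G.degree a + ∑ w ∈ farFinset c v, G.degree w := by
  rw [← sum_sdiff (insert_neighborFinset_subset_supp hv),
    sum_insert (notMem_neighborFinset_self G v), farFinset]
  ring

lemma degree_le_of_mem_supp {c : G.ConnectedComponent} {u : V} (v : V) (hu : u ∈ c.supp) :
    G.degree u ≤
      1 + #(G.neighborFinset u ∩ G.neighborFinset v) + #(G.neighborFinset u ∩ farFinset c v) := by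
  have hsub : G.neighborFinset u ⊆
      insert v (G.neighborFinset u ∩ G.neighborFinset v ∪ G.neighborFinset u ∩ farFinset c v) := by
    intro w hw
    have hwS := Set.mem_toFinset.1 (neighborFinset_subset_supp hu hw)
    by_cases hwv : w = v
    · exact hwv ▸ mem_insert_self _ _
    by_cases hvw : G.Adj v w
    · simp [hw, hvw]
    · simp [hw, mem_farFinset, hwS, hwv, hvw]
  rw [← card_neighborFinset_eq_degree]
  refine (card_le_card hsub).trans ((card_insert_le _ _).trans ?_)
  have := card_union_le (G.neighborFinset u ∩ G.neighborFinset v)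
    (G.neighborFinset u ∩ farFinset c v)
  omega

lemma sum_degree_farFinset_le (hfree : (TnStar 11).Free G) {c : G.ConnectedComponent} {v : V}
    (hv : v ∈ c.supp) (h9 : 9 ≤ G.degree v) :
    ∑ w ∈ farFinset c v, G.degree w ≤ #(farFinset c v) := by
  refine (sum_le_card_nsmul _ _ 1 fun w hw => ?_).trans_eq (by simp)
  obtain ⟨hwS, hwv, hvw⟩ := mem_farFinset.1 hw
  exact degree_le_one_of_reachable hfree h9 (c.reachable_of_mem_supp hv hwS) hwv hvw

/-- Each neighbour of `v` has at most one neighbour in `N(v)`, and the vertices of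
`farFinset c v` are leaves hanging from `N(v)`. -/
theorem sum_degree_supp_add_three_le (hfree : (TnStar 11).Free G) {c : G.ConnectedComponent}
    {v : V} (hv : v ∈ c.supp) (h10 : 10 ≤ G.degree v) :
    ∑ u ∈ c.supp.toFinset, G.degree u + 3 ≤ 3 * #c.supp.toFinset := by
  have hA : ∀ a ∈ G.neighborFinset v, #(G.neighborFinset a ∩ G.neighborFinset v) ≤ 1 := by
    intro a ha
    by_contra h
    obtain ⟨x, hx, x', hx', hne⟩ := one_lt_card.1 (not_le.1 h)
    simp only [mem_inter, mem_neighborFinset] at ha hx hx'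
    have := degree_le_of_path hfree hx.2 hx.1.symm hx'.1 (G.ne_of_adj ha).symm
      (G.ne_of_adj hx'.2).symm (Ne.symm hne)
    have : #(G.neighborFinset v ∩ {a, x'}) ≤ 2 :=
      (card_le_card inter_subset_right).trans card_le_two
    omega
  have hP := sum_degree_farFinset_le hfree hv (by omega)
  have hAP : ∑ a ∈ G.neighborFinset v, #(G.neighborFinset a ∩ farFinset c v) ≤
      #(farFinset c v) := by
    rw [sum_card_neighborFinset_inter_comm]
    refine (sum_le_sum fun w _ => ?_).trans hP
    exact (card_le_card inter_subset_left).trans_eq (card_neighborFinset_eq_degree _ _)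
  have hsumA : ∑ a ∈ G.neighborFinset v, G.degree a ≤
      ∑ a ∈ G.neighborFinset v, (2 + #(G.neighborFinset a ∩ farFinset c v)) :=
    sum_le_sum fun a ha => (degree_le_of_mem_supp v
      (c.mem_supp_of_adj_mem_supp hv ((mem_neighborFinset _ _ _).1 ha))).trans
      (by have := hA a ha; omega)
  rw [sum_add_distrib, sum_const, smul_eq_mul, card_neighborFinset_eq_degree] at hsumA
  have := sum_degree_supp_eq hv
  have := card_supp_eq hv
  omega

/-- Some vertex `w` of `farFinset c v` exists; its neighbour `a ∈ N(v)` has no neighbour in `N(v)`,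
so `deg a ≤ 1 + #(farFinset c v)` instead of `9`. -/
theorem sum_degree_supp_le_of_degree_eq_nine (hfree : (TnStar 11).Free G)
    {c : G.ConnectedComponent} {v : V} (hv : v ∈ c.supp) (h9 : G.degree v = 9)
    (hmax : ∀ u ∈ c.supp.toFinset, G.degree u ≤ 9) (hcard : 11 ≤ #c.supp.toFinset) :
    ∑ u ∈ c.supp.toFinset, G.degree u ≤ 2 * #c.supp.toFinset + 62 := by
  have hcardS := card_supp_eq hv
  obtain ⟨w, hw⟩ : (farFinset c v).Nonempty := card_pos.1 (by omega)
  obtain ⟨hwS, hwv, hvw⟩ := mem_farFinset.1 hw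
  obtain ⟨a, hwa⟩ :=
    (mem_support G).1 (mem_support_of_reachable hwv (c.reachable_of_mem_supp hwS hv))
  have hva : G.Adj v a := by
    have := (adj_or_neighborFinset_subset hfree (by omega)
      (c.reachable_of_mem_supp hv hwS)).resolve_left hvw
    exact (mem_neighborFinset _ _ _).1 (this ((mem_neighborFinset _ _ _).2 hwa))
  have haA : G.neighborFinset a ∩ G.neighborFinset v = ∅ := by
    refine eq_empty_of_forall_notMem fun u hu => ?_
    simp only [mem_inter, mem_neighborFinset] at hu
    have := degree_le_of_path hfree hu.2 hu.1.symm hwa.symm (G.ne_of_adj hva).symm hwv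
      (by rintro rfl; exact hvw hu.2)
    have := card_neighborFinset_inter_pair_le_one (y := a) hvw
    omega
  have hdega : G.degree a ≤ 1 + #(farFinset c v) := by
    have := degree_le_of_mem_supp v (c.mem_supp_of_adj_mem_supp hv hva)
    rw [haA, card_empty] at this
    have := card_le_card (inter_subset_right (s₁ := G.neighborFinset a) (s₂ := farFinset c v))
    omega
  have hsumA : ∑ u ∈ G.neighborFinset v, G.degree u ≤ 72 + (1 + #(farFinset c v)) := by
    have haA' : a ∈ G.neighborFinset v := (mem_neighborFinset _ _ _).2 hva
    rw [← add_sum_erase _ _ haA']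
    have : ∑ u ∈ (G.neighborFinset v).erase a, G.degree u ≤
        #((G.neighborFinset v).erase a) • 9 :=
      sum_le_card_nsmul _ _ _ fun u hu =>
        hmax u (neighborFinset_subset_supp hv (mem_of_mem_erase hu))
    rw [card_erase_of_mem haA', card_neighborFinset_eq_degree, h9, smul_eq_mul] at this
    omega
  have := sum_degree_supp_eq hv
  have := sum_degree_farFinset_le hfree hv (by omega)
  omega

theorem sum_degree_supp_eq_sum_weight (hfree : (TnStar 11).Free G) {c : G.ConnectedComponent}
    {v : V} (hv : v ∈ c.supp) (h8 : 8 ≤ G.degree v) : ∑ u ∈ c.supp.toFinset, G.degree u =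
      ∑ a ∈ G.neighborFinset v, weight G c.supp.toFinset (G.neighborFinset v) a := by
  refine sum_degree_eq_sum_weight (fun u hu => neighborFinset_subset_supp (Set.mem_toFinset.1 hu))
    (neighborFinset_subset_supp hv) fun b hb => ?_
  obtain ⟨hbS, hbA⟩ := mem_sdiff.1 hb
  exact (adj_or_neighborFinset_subset hfree h8
    (c.reachable_of_mem_supp hv (Set.mem_toFinset.1 hbS))).resolve_left
    fun h => hbA ((mem_neighborFinset _ _ _).2 h)

theorem sum_degree_supp_le_of_degree_eq_eight (hfree : (TnStar 11).Free G)
    {c : G.ConnectedComponent} {v : V} (hv : v ∈ c.supp) (h8 : G.degree v = 8)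
    (hmax : ∀ u ∈ c.supp.toFinset, G.degree u ≤ 8) : ∑ u ∈ c.supp.toFinset, G.degree u ≤ 128 := by
  rw [sum_degree_supp_eq_sum_weight hfree hv h8.ge]
  refine (sum_le_card_nsmul _ _ 16 fun a ha => ?_).trans
    (by rw [card_neighborFinset_eq_degree, h8]; rfl)
  have := card_inter_add_card_inter_le_degree (G := G) (S := c.supp.toFinset)
    (A := G.neighborFinset v) a
  have := hmax a (neighborFinset_subset_supp hv ha)
  rw [weight]
  omega

/-- A vertex `u ∈ N(v)` of weight `14` is adjacent to all six vertices outside `N(v)` and to two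
inside, so it has degree `8` and `adj_or_neighborFinset_subset` applies around `u` as well. -/
theorem sum_degree_supp_le_of_card_eq_fourteen (hfree : (TnStar 11).Free G)
    {c : G.ConnectedComponent} {v : V} (hv : v ∈ c.supp) (h8 : G.degree v = 8)
    (hmax : ∀ u ∈ c.supp.toFinset, G.degree u ≤ 8) (hcard : #c.supp.toFinset = 14) :
    ∑ u ∈ c.supp.toFinset, G.degree u ≤ 104 := by
  rw [sum_degree_supp_eq_sum_weight hfree hv h8.ge]
  have hB : #(c.supp.toFinset \ G.neighborFinset v) = 6 := by
    rw [card_sdiff_of_subset (neighborFinset_subset_supp hv), hcard, card_neighborFinset_eq_degree,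
      h8]
  by_cases hall : ∀ a ∈ G.neighborFinset v, weight G c.supp.toFinset (G.neighborFinset v) a ≤ 13
  · exact (sum_le_card_nsmul _ _ _ hall).trans (by rw [card_neighborFinset_eq_degree, h8]; rfl)
  simp only [not_forall, not_le] at hall
  obtain ⟨u, hu, hu14⟩ := hall
  have huS : u ∈ c.supp := c.mem_supp_of_adj_mem_supp hv ((mem_neighborFinset _ _ _).1 hu)
  have := card_inter_add_card_inter_le_degree (G := G) (S := c.supp.toFinset)
    (A := G.neighborFinset v) u
  have := (card_le_card (inter_subset_right (s₁ := G.neighborFinset u))).trans hB.le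
  have := hmax u (Set.mem_toFinset.2 huS)
  rw [weight] at hu14
  refine sum_weight_le_of_card_inter_eq_two (by rw [card_neighborFinset_eq_degree, h8]) hB.le
    (fun a ha => hmax a (neighborFinset_subset_supp hv ha)) hu (by omega) fun a ha hua => ?_
  exact (adj_or_neighborFinset_subset hfree (by omega) (c.reachable_of_mem_supp huS
    (c.mem_supp_of_adj_mem_supp hv ((mem_neighborFinset _ _ _).1 ha)))).resolve_left hua

theorem sum_degree_supp_add_deficit_le (hfree : (TnStar 11).Free G) (c : G.ConnectedComponent) :
    ∑ u ∈ c.supp.toFinset, G.degree u + deficit #c.supp.toFinset ≤ 9 * #c.supp.toFinset := by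
  obtain ⟨v, hv⟩ := c.nonempty_supp
  have hsmall := sum_degree_supp_le_card_mul c
  generalize hn : #c.supp.toFinset = n at *
  rcases le_or_gt n 10 with h10 | h11
  · rw [deficit, if_pos h10]
    interval_cases n <;> omega
  obtain ⟨w, hwS, hwmax⟩ :=
    exists_max_image c.supp.toFinset (fun u => G.degree u) ⟨v, Set.mem_toFinset.2 hv⟩
  have hw := Set.mem_toFinset.1 hwS
  have hmax (d : ℕ) (hd : G.degree w ≤ d) : ∀ u ∈ c.supp.toFinset, G.degree u ≤ d :=
    fun u hu => (hwmax u hu).trans hd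
  have hsum (d : ℕ) (hd : G.degree w ≤ d) : ∑ u ∈ c.supp.toFinset, G.degree u ≤ n * d := by
    simpa [hn] using sum_le_card_nsmul _ _ _ (hmax d hd)
  obtain h | h | h | h : 10 ≤ G.degree w ∨ G.degree w = 9 ∨ G.degree w = 8 ∨ G.degree w ≤ 7 := by
    omega
  · have := sum_degree_supp_add_three_le hfree hw h
    unfold deficit; split_ifs <;> omega
  · have := sum_degree_supp_le_of_degree_eq_nine hfree hw h (hmax 9 h.le) (by omega)
    unfold deficit; split_ifs <;> omega
  · have := sum_degree_supp_le_of_degree_eq_eight hfree hw h (hmax 8 h.le)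
    have := hsum 8 h.le
    rcases eq_or_ne n 14 with h14 | h14
    · have := sum_degree_supp_le_of_card_eq_fourteen hfree hw h (hmax 8 h.le) (by omega)
      unfold deficit; split_ifs <;> omega
    · unfold deficit; split_ifs <;> omega
  · have := hsum 7 h
    unfold deficit; split_ifs <;> omega

theorem two_mul_card_edgeFinset_add_le (hfree : (TnStar 11).Free G)
    (hV : Fintype.card V % 10 = 4) : 2 * #G.edgeFinset + 22 ≤ 9 * Fintype.card V := by
  classical
  have hsupp (c : G.ConnectedComponent) :
      c.supp.toFinset = univ.filter (G.connectedComponentMk · = c) := by ext; simp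
  have hdeg : ∑ c : G.ConnectedComponent, ∑ u ∈ c.supp.toFinset, G.degree u =
      ∑ u, G.degree u := by
    simp only [hsupp]; exact sum_fiberwise _ _ _
  have hcard : ∑ c : G.ConnectedComponent, #c.supp.toFinset = Fintype.card V := by
    simp only [hsupp]; exact (card_eq_sum_card_fiberwise fun _ _ => mem_univ _).symm
  have h22 := twentyTwo_le_sum_deficit univ (fun c : G.ConnectedComponent => #c.supp.toFinset)
    (fun c _ => card_pos.2 (Set.toFinset_nonempty.2 c.nonempty_supp)) (hcard ▸ hV)
  have := sum_le_sum fun c (_ : c ∈ univ) => sum_degree_supp_add_deficit_le hfree c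
  rw [sum_add_distrib, hdeg, sum_degrees_eq_twice_card_edges, ← mul_sum, hcard] at this
  omega

end Components

section Construction

/-- `K_{8,6}` with parts `{0, …, 7}` and `{8, …, 13}`, together with the perfect matching
`{2i, 2i + 1}` on the first part. -/
def matchedBipartite : SimpleGraph (Fin 14) where
  Adj a b := (a.val < 8 ∧ 8 ≤ b.val) ∨ (8 ≤ a.val ∧ b.val < 8) ∨
    (a.val ≠ b.val ∧ b.val < 8 ∧ a.val / 2 = b.val / 2)
  symm := ⟨fun a b h => by omega⟩
  loopless := ⟨fun a h => by omega⟩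

lemma matchedBipartite_adj {a b : Fin 14} : matchedBipartite.Adj a b ↔
    (a.val < 8 ∧ 8 ≤ b.val) ∨ (8 ≤ a.val ∧ b.val < 8) ∨
      (a.val ≠ b.val ∧ b.val < 8 ∧ a.val / 2 = b.val / 2) := Iff.rfl

instance : DecidableRel matchedBipartite.Adj := fun _ _ => decidable_of_iff' _ matchedBipartite_adj

lemma matchedBipartite_degree (a : Fin 14) :
    matchedBipartite.degree a = if a.val < 8 then 7 else 8 := by
  rw [← card_neighborFinset_eq_degree, neighborFinset_eq_filter]
  revert a
  decide

lemma matchedBipartite_adj_or_adj {a y z : Fin 14} (ha : 8 ≤ a.val)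
    (hyz : matchedBipartite.Adj y z) : matchedBipartite.Adj a y ∨ matchedBipartite.Adj a z := by
  simp only [matchedBipartite_adj] at *
  omega

def extremalGraph (k : ℕ) : SimpleGraph ((Fin k × Fin 10) ⊕ Fin 14) where
  Adj
    | .inl x, .inl y => x.1 = y.1 ∧ x.2 ≠ y.2
    | .inr a, .inr b => matchedBipartite.Adj a b
    | _, _ => False
  symm := ⟨by
    rintro (x | a) (y | b) h
    exacts [⟨h.1.symm, h.2.symm⟩, h, h, h.symm]⟩
  loopless := ⟨by
    rintro (x | a) h
    exacts [h.2 rfl, matchedBipartite.loopless.irrefl a h]⟩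

instance (k : ℕ) : DecidableRel (extremalGraph k).Adj
  | .inl _, .inl _ => inferInstanceAs (Decidable (_ ∧ _))
  | .inr a, .inr b => inferInstanceAs (Decidable (matchedBipartite.Adj a b))
  | .inl _, .inr _ => inferInstanceAs (Decidable False)
  | .inr _, .inl _ => inferInstanceAs (Decidable False)

variable {k : ℕ}

@[simp] lemma extremalGraph_adj_inl_inl {x y : Fin k × Fin 10} :
    (extremalGraph k).Adj (.inl x) (.inl y) ↔ x.1 = y.1 ∧ x.2 ≠ y.2 := Iff.rfl

@[simp] lemma extremalGraph_adj_inr_inr {a b : Fin 14} :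
    (extremalGraph k).Adj (.inr a) (.inr b) ↔ matchedBipartite.Adj a b := Iff.rfl

@[simp] lemma extremalGraph_not_adj_inl_inr {x : Fin k × Fin 10} {a : Fin 14} :
    ¬ (extremalGraph k).Adj (.inl x) (.inr a) := id

@[simp] lemma extremalGraph_not_adj_inr_inl {x : Fin k × Fin 10} {a : Fin 14} :
    ¬ (extremalGraph k).Adj (.inr a) (.inl x) := id

lemma extremalGraph_degree_inl (b : Fin k) (i : Fin 10) :
    (extremalGraph k).degree (.inl (b, i)) = 9 := by
  have : (extremalGraph k).neighborFinset (.inl (b, i)) =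
      (univ.erase i).map ((Function.Embedding.sectR b (Fin 10)).trans Function.Embedding.inl) := by
    ext (⟨b', j⟩ | a) <;> aesop
  rw [← card_neighborFinset_eq_degree, this, card_map, card_erase_of_mem (mem_univ _), card_univ,
    Fintype.card_fin]

lemma extremalGraph_degree_inr (a : Fin 14) :
    (extremalGraph k).degree (.inr a) = matchedBipartite.degree a := by
  have : (extremalGraph k).neighborFinset (.inr a) =
      (matchedBipartite.neighborFinset a).map Function.Embedding.inr := by
    ext (y | b) <;> simp
  rw [← card_neighborFinset_eq_degree, this, card_map, card_neighborFinset_eq_degree]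

theorem card_edgeFinset_extremalGraph : #(extremalGraph k).edgeFinset = 45 * k + 52 := by
  have h := sum_degrees_eq_twice_card_edges (extremalGraph k)
  simp only [Fintype.sum_sum_type, Fintype.sum_prod_type, extremalGraph_degree_inl,
    extremalGraph_degree_inr, matchedBipartite_degree, sum_const, card_univ, Fintype.card_fin,
    smul_eq_mul] at h
  have : ∑ a : Fin 14, (if a.val < 8 then 7 else 8) = 104 := by decide
  omega

/-- In a copy of `K₁₀` the vertices `y, z` are neighbours of `v`; in `matchedBipartite` a vertex of
degree `8` is adjacent to one end of every edge. -/
theorem extremalGraph_free : (TnStar 11).Free (extremalGraph k) := by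
  rw [Free, tnStar_isContained_iff]
  rintro ⟨v, x, y, z, hvx, hxy, hyz, hyv, hzv, hzx, hdeg⟩
  rcases v with ⟨b, i⟩ | a <;> rcases x with ⟨b₁, i₁⟩ | a₁ <;> rcases y with ⟨b₂, i₂⟩ | a₂ <;>
    rcases z with ⟨b₃, i₃⟩ | a₃ <;> simp only [extremalGraph_adj_inl_inl,
      extremalGraph_adj_inr_inr, extremalGraph_not_adj_inl_inr, extremalGraph_not_adj_inr_inl]
      at hvx hxy hyz
  · obtain ⟨rfl, -⟩ := hvx
    obtain ⟨rfl, -⟩ := hxy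
    obtain ⟨rfl, hi⟩ := hyz
    simp only [ne_eq, Sum.inl.injEq, Prod.mk.injEq, true_and] at hyv hzv
    have hsub : {.inl (b, i₂), .inl (b, i₃)} ⊆ (extremalGraph k).neighborFinset (.inl (b, i)) := by
      simp [insert_subset_iff, Ne.symm hyv, Ne.symm hzv]
    rw [inter_eq_right.2 hsub, card_pair (by simpa using hi), extremalGraph_degree_inl] at hdeg
    omega
  · rw [extremalGraph_degree_inr, matchedBipartite_degree] at hdeg
    split_ifs at hdeg with ha
    · omega
    have : 0 < #((extremalGraph k).neighborFinset (.inr a) ∩ {.inr a₂, .inr a₃}) := by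
      rcases matchedBipartite_adj_or_adj (not_lt.1 ha) hyz with h | h
      exacts [card_pos.2 ⟨.inr a₂, by simpa using h⟩, card_pos.2 ⟨.inr a₃, by simpa using h⟩]
    omega

theorem exists_free_card_edgeSet (k : ℕ) : ∃ G : SimpleGraph (Fin (10 * k + 14)),
    (TnStar 11).Free G ∧ Nat.card G.edgeSet = 45 * k + 52 := by
  let e : (Fin k × Fin 10) ⊕ Fin 14 ≃ Fin (10 * k + 14) :=
    Fintype.equivFinOfCardEq (by simp [mul_comm])
  let iso := Iso.map e (extremalGraph k)
  refine ⟨_, (free_congr_right iso).1 extremalGraph_free, ?_⟩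
  rw [← Nat.card_congr iso.mapEdgeSet, Nat.card_eq_fintype_card, ← edgeFinset_card,
    card_edgeFinset_extremalGraph]

end Construction

theorem stmt18 (p : ℕ) (hp : 11 ≤ p) (hmod : p % 10 = 4) :
    exNum p (TnStar 11) = (9 * p - 22) / 2 := by
  refine IsGreatest.csSup_eq ⟨?_, ?_⟩
  · obtain ⟨k, rfl⟩ : ∃ k, p = 10 * k + 14 := ⟨p / 10 - 1, by omega⟩
    obtain ⟨G, hfree, hcard⟩ := exists_free_card_edgeSet k
    exact ⟨G, containsCopy_iff_isContained.not.2 hfree, by omega⟩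
  · rintro _ ⟨G, hfree, rfl⟩
    classical
    have := two_mul_card_edgeFinset_add_le (containsCopy_iff_isContained.not.1 hfree)
      (by simpa using hmod)
    rw [Fintype.card_fin] at this
    rw [Nat.card_eq_fintype_card, ← edgeFinset_card]
    omega
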